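/- (Example 4.4: the μ_D-HN filtration strictly refines the μ_θ-HN filtration and is a strict subfiltration of a Jordan-Hölder filtration.) With ι = ℤ, h given by h(0) = h(1) = 2 and h(r) = 1 for r ∉ {0,1}, and θ given by θ(−1) = 5, θ(−r) = 0 for r ≥ 2, θ(0) = θ(1) = −1, θ(2) = −2, θ(r) = 2^{2−r} for r ≥ 3, one has: (i) θ is a stability function for h (so D₋ = {0,1,2}); (ii) for the five Hilbert functions h₁ (h₁(1)=1 and 0 elsewhere), h₂ = indicator of {r ≥ 1}, h₃ = indicator of {r ≥ 0}, h₄ (h₄(0)=1, h₄(1)=2, h₄(r)=1 for r ≥ 2, h₄(r)=0 for r < 0), h₅ (h₅(0)=h₅(1)=1 and 0 elsewhere), one has μ_θ(hᵢ) = 1 for i = 1,…,5, while μ_θ(h) = 0; (iii) there exists N₁ such that for all N ≥ N₁ the set D_N := {−N, …, N} is admissible and μ_{D_N}(h₂) > μ_{D_N}(h₃) > μ_{D_N}(h₄) > μ_{D_N}(h₁) = μ_{D_N}(h₅) = 1. -/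

import Mathlib

open scoped BigOperators

noncomputable section

/-- The value `θ(h') = ∑_ρ θ(ρ)·h'(ρ)` of a stability function on a Hilbert function. -/
def thetaVal {ι : Type*} (θ : ι → ℚ) (h' : ι → ℕ) : ℝ :=
  ∑' ρ : ι, (θ ρ : ℝ) * (h' ρ : ℝ)

/-- `r(h') = ∑_{ρ ∈ D₋} h'(ρ)`, the sum of the multiplicities over the negative part
`D₋ = {ρ | θ ρ < 0}`. -/
def rkNeg {ι : Type*} (θ : ι → ℚ) (h' : ι → ℕ) : ℝ :=
  ∑' ρ : {ρ : ι // θ ρ < 0}, (h' ρ.1 : ℝ)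

/-- The θ-slope `μ_θ(h') = −θ(h')/r(h')`. -/
def muTheta {ι : Type*} (θ : ι → ℚ) (h' : ι → ℕ) : ℝ :=
  -thetaVal θ h' / rkNeg θ h'

/-- `θ` is a stability function for the Hilbert function `h`: `D₋ = {θ < 0}` is finite,
`D₊ = {θ > 0}` is infinite, `θ` vanishes where `h` does, and `ρ ↦ θ(ρ)·h(ρ)` is summable
with sum `0`. -/
structure IsStabilityFunction {ι : Type*} (h : ι → ℕ) (θ : ι → ℚ) : Prop where
  finite_neg : {ρ : ι | θ ρ < 0}.Finite
  infinite_pos : {ρ : ι | 0 < θ ρ}.Infinite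
  theta_eq_zero_of_h_eq_zero : ∀ ρ, h ρ = 0 → θ ρ = 0
  summable : Summable fun ρ : ι => (θ ρ : ℝ) * (h ρ : ℝ)
  thetaVal_eq_zero : thetaVal θ h = 0

/-- `D` is an admissible finite subset: `D₋ ⊆ D ⊆ supp h` and `D ∩ D₊ ≠ ∅`. -/
def Admissible {ι : Type*} (h : ι → ℕ) (θ : ι → ℚ) (D : Finset ι) : Prop :=
  {ρ : ι | θ ρ < 0} ⊆ (D : Set ι) ∧ (D : Set ι) ⊆ {ρ : ι | h ρ ≠ 0} ∧ ∃ ρ ∈ D, 0 < θ ρ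

/-- `S_D = ∑_{ρ ∉ D} θ(ρ)·h(ρ)`. -/
def SD {ι : Type*} (h : ι → ℕ) (θ : ι → ℚ) (D : Finset ι) : ℝ :=
  ∑' ρ : {ρ : ι // ρ ∉ D}, (θ ρ.1 : ℝ) * (h ρ.1 : ℝ)

/-- The finite set `D \ D₋`. -/
def DsubNeg {ι : Type*} (θ : ι → ℚ) (D : Finset ι) : Finset ι :=
  D.filter fun ρ => 0 ≤ θ ρ

/-- `d = card (D \ D₋)`. -/
def dD {ι : Type*} (θ : ι → ℚ) (D : Finset ι) : ℕ :=
  (DsubNeg θ D).card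

/-- The D-slope
`μ_D(h') = (−1/r(h'))·( ∑_{ρ∈D} θ(ρ)h'(ρ) + (S_D/d)·∑_{ρ∈D∖D₋} h'(ρ)/h(ρ) )`. -/
def muD {ι : Type*} (h : ι → ℕ) (θ : ι → ℚ) (D : Finset ι) (h' : ι → ℕ) : ℝ :=
  (-1 / rkNeg θ h') *
    ((∑ ρ ∈ D, (θ ρ : ℝ) * (h' ρ : ℝ)) +
      (SD h θ D / (dD θ D : ℝ)) * ∑ ρ ∈ DsubNeg θ D, (h' ρ : ℝ) / (h ρ : ℝ))

/-- The Hilbert function of `𝒪_X` for `X = Spec ℂ[x,y]/(xy², x³y)`: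
`h(0) = h(1) = 2` and `h(r) = 1` otherwise. -/
def hEx : ℤ → ℕ := fun r => if r = 0 ∨ r = 1 then 2 else 1

/-- The stability function of Example 4.4: `θ(−1) = 5`, `θ(−r) = 0` for `r ≥ 2`,
`θ(0) = θ(1) = −1`, `θ(2) = −2`, `θ(r) = 2^{2−r}` for `r ≥ 3`. -/
def θEx : ℤ → ℚ := fun r =>
  if r = -1 then 5
  else if r ≤ -2 then 0
  else if r = 0 ∨ r = 1 then -1
  else if r = 2 then -2
  else (2 : ℚ) ^ (2 - r)

/-- The Hilbert function of the submodule `(x̄²ȳ)`. -/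
def hSub₁ : ℤ → ℕ := fun r => if r = 1 then 1 else 0

/-- The Hilbert function of the submodule `(x̄²)`: the indicator of `{r | r ≥ 1}`. -/
def hSub₂ : ℤ → ℕ := fun r => if 1 ≤ r then 1 else 0

/-- The Hilbert function of the submodule `(x̄², x̄ȳ)`: the indicator of `{r | r ≥ 0}`. -/
def hSub₃ : ℤ → ℕ := fun r => if 0 ≤ r then 1 else 0

/-- The Hilbert function of the submodule `(x̄)`: `1, 2, 1, 1, …` in weights
`0, 1, 2, 3, …` and `0` in negative weights. -/
def hSub₄ : ℤ → ℕ := fun r => if r = 1 then 2 else if 0 ≤ r then 1 else 0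

/-- The Hilbert function of the submodule `(x̄ȳ)`. -/
def hSub₅ : ℤ → ℕ := fun r => if r = 0 ∨ r = 1 then 1 else 0

/-! ### Auxiliary lemmas -/

lemma θEx_neg2 (r : ℤ) (hr : r ≤ -2) : θEx r = 0 := by
  simp only [θEx]; rw [if_neg (by omega), if_pos hr]

lemma θEx_large (r : ℤ) (hr : 3 ≤ r) : θEx r = (2:ℚ)^(2-r) := by
  simp only [θEx]
  rw [if_neg (by omega), if_neg (by omega), if_neg (by omega), if_neg (by omega)]

lemma θEx_pos_large (r : ℤ) (hr : 3 ≤ r) : 0 < θEx r := by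
  rw [θEx_large r hr]; exact zpow_pos (by norm_num) _

lemma theta_neg_set : {ρ : ℤ | θEx ρ < 0} = ({0, 1, 2} : Set ℤ) := by
  ext ρ
  simp only [Set.mem_setOf_eq, Set.mem_insert_iff, Set.mem_singleton_iff]
  constructor
  · intro h
    by_contra hc
    push_neg at hc
    obtain ⟨h0, h1, h2⟩ := hc
    rcases lt_trichotomy ρ 3 with h3 | h3 | h3
    · have : ρ ≤ -2 ∨ ρ = -1 := by omega
      rcases this with h4 | h4
      · rw [θEx_neg2 ρ h4] at h; norm_num at h
      · subst h4; simp [θEx] at h; norm_num at h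
    · subst h3; exact absurd h (not_lt.2 (le_of_lt (θEx_pos_large 3 le_rfl)))
    · exact absurd h (not_lt.2 (le_of_lt (θEx_pos_large ρ (by omega))))
  · rintro (rfl | rfl | rfl) <;> simp [θEx]

lemma tail_geom : HasSum (fun n : ℕ => ((2:ℝ)⁻¹)^(n+1)) 1 := by
  have h : HasSum (fun n : ℕ => ((2:ℝ)⁻¹)^n) 2 := by
    have := hasSum_geometric_of_lt_one (r := (2:ℝ)⁻¹) (by norm_num) (by norm_num)
    convert this using 2 <;> norm_num
  have := h.mul_left (2:ℝ)⁻¹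
  norm_num at this
  convert this using 2 with n
  · rfl
  ring

lemma hasSum_int_aux (f : ℤ → ℝ) (h0 : ∀ r : ℤ, r ≤ -2 → f r = 0) (c : ℝ)
    (htail : HasSum (fun n : ℕ => f ((n:ℤ) + 3)) c) :
    HasSum f (f (-1) + f 0 + f 1 + f 2 + c) := by
  have hinj : Function.Injective (fun n : ℕ => (n:ℤ) - 1) := by
    intro a b hab; simpa using hab
  have h4 : HasSum (fun n : ℕ => f (((n+4 : ℕ):ℤ) - 1)) c := by
    convert htail using 2 with n; push_cast; ring_nf
  have hg : HasSum (fun n : ℕ => f ((n:ℤ) - 1))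
      (c + ∑ i ∈ Finset.range 4, f ((i:ℤ) - 1)) :=
    (hasSum_nat_add_iff (f := fun n : ℕ => f ((n:ℤ) - 1)) 4).mp h4
  have hzero : ∀ x ∉ Set.range (fun n : ℕ => (n:ℤ) - 1), f x = 0 := by
    intro x hx
    apply h0
    by_contra hc
    push_neg at hc
    exact hx ⟨(x+1).toNat, by simp; omega⟩
  have := (hinj.hasSum_iff hzero).mp hg
  convert this using 1
  rw [Finset.sum_range_succ, Finset.sum_range_succ, Finset.sum_range_succ,
    Finset.sum_range_one]
  norm_num
  ring

lemma tail_theta (n : ℕ) : ((θEx ((n:ℤ)+3) : ℚ) : ℝ) = ((2:ℝ)⁻¹)^(n+1) := by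
  rw [θEx_large _ (by omega)]
  push_cast
  rw [show (2 - ((n:ℤ)+3)) = -((n+1:ℕ):ℤ) by push_cast; ring, zpow_neg, zpow_natCast,
    ← inv_pow]

lemma hasSum_theta (h' : ℤ → ℕ) (c : ℝ)
    (htail : HasSum (fun n : ℕ => ((θEx ((n:ℤ)+3) : ℚ):ℝ) * (h' ((n:ℤ)+3):ℝ)) c) :
    HasSum (fun ρ : ℤ => ((θEx ρ : ℚ):ℝ) * (h' ρ : ℝ))
      (((θEx (-1) : ℚ):ℝ)*(h' (-1):ℝ) + ((θEx 0 : ℚ):ℝ)*(h' 0:ℝ)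
        + ((θEx 1 : ℚ):ℝ)*(h' 1:ℝ) + ((θEx 2 : ℚ):ℝ)*(h' 2:ℝ) + c) :=
  hasSum_int_aux _ (fun r hr => by rw [θEx_neg2 r hr]; simp) c htail

lemma tail_one (h' : ℤ → ℕ) (hone : ∀ r : ℤ, 3 ≤ r → h' r = 1) :
    HasSum (fun n : ℕ => ((θEx ((n:ℤ)+3) : ℚ):ℝ) * (h' ((n:ℤ)+3):ℝ)) 1 := by
  have : (fun n : ℕ => ((θEx ((n:ℤ)+3) : ℚ):ℝ) * (h' ((n:ℤ)+3):ℝ))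
      = fun n : ℕ => ((2:ℝ)⁻¹)^(n+1) := by
    funext n
    rw [hone _ (by omega), tail_theta]
    norm_num
  rw [this]; exact tail_geom

lemma tail_zero (h' : ℤ → ℕ) (hz : ∀ r : ℤ, 3 ≤ r → h' r = 0) :
    HasSum (fun n : ℕ => ((θEx ((n:ℤ)+3) : ℚ):ℝ) * (h' ((n:ℤ)+3):ℝ)) 0 := by
  have : (fun n : ℕ => ((θEx ((n:ℤ)+3) : ℚ):ℝ) * (h' ((n:ℤ)+3):ℝ)) = fun _ => (0:ℝ) := by
    funext n
    rw [hz _ (by omega)]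
    norm_num
  rw [this]; exact hasSum_zero

lemma hasSum_hEx : HasSum (fun ρ : ℤ => ((θEx ρ : ℚ):ℝ) * (hEx ρ : ℝ)) 0 := by
  convert hasSum_theta hEx 1 (tail_one hEx (fun r hr => by
    simp only [hEx]; rw [if_neg (by omega)])) using 1
  norm_num [θEx, hEx]

lemma hasSum_h1 : HasSum (fun ρ : ℤ => ((θEx ρ : ℚ):ℝ) * (hSub₁ ρ : ℝ)) (-1) := by
  convert hasSum_theta hSub₁ 0 (tail_zero hSub₁ (fun r hr => by
    simp only [hSub₁]; rw [if_neg (by omega)])) using 1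
  norm_num [θEx, hSub₁]

lemma hasSum_h2 : HasSum (fun ρ : ℤ => ((θEx ρ : ℚ):ℝ) * (hSub₂ ρ : ℝ)) (-2) := by
  convert hasSum_theta hSub₂ 1 (tail_one hSub₂ (fun r hr => by
    simp only [hSub₂]; rw [if_pos (by omega)])) using 1
  norm_num [θEx, hSub₂]

lemma hasSum_h3 : HasSum (fun ρ : ℤ => ((θEx ρ : ℚ):ℝ) * (hSub₃ ρ : ℝ)) (-3) := by
  convert hasSum_theta hSub₃ 1 (tail_one hSub₃ (fun r hr => by
    simp only [hSub₃]; rw [if_pos (by omega)])) using 1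
  norm_num [θEx, hSub₃]

lemma hasSum_h4 : HasSum (fun ρ : ℤ => ((θEx ρ : ℚ):ℝ) * (hSub₄ ρ : ℝ)) (-4) := by
  convert hasSum_theta hSub₄ 1 (tail_one hSub₄ (fun r hr => by
    simp only [hSub₄]; rw [if_neg (by omega), if_pos (by omega)])) using 1
  norm_num [θEx, hSub₄]

lemma hasSum_h5 : HasSum (fun ρ : ℤ => ((θEx ρ : ℚ):ℝ) * (hSub₅ ρ : ℝ)) (-2) := by
  convert hasSum_theta hSub₅ 0 (tail_zero hSub₅ (fun r hr => by
    simp only [hSub₅]; rw [if_neg (by omega)])) using 1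
  norm_num [θEx, hSub₅]

lemma rkNeg_eval (h' : ℤ → ℕ) : rkNeg θEx h' = (h' 0:ℝ) + (h' 1:ℝ) + (h' 2:ℝ) := by
  have h1 : rkNeg θEx h' = ∑' ρ : ℤ, Set.indicator {ρ : ℤ | θEx ρ < 0}
      (fun ρ => (h' ρ : ℝ)) ρ := by
    exact tsum_subtype {ρ : ℤ | θEx ρ < 0} fun ρ => (h' ρ : ℝ)
  rw [h1, theta_neg_set]
  rw [tsum_eq_sum (s := ({0,1,2} : Finset ℤ)) (by
    intro b hb
    simp only [Finset.mem_insert, Finset.mem_singleton] at hb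
    push_neg at hb
    simp [Set.indicator, hb.1, hb.2.1, hb.2.2])]
  rw [show ({0,1,2} : Finset ℤ) = insert 0 (insert 1 {2}) from rfl,
    Finset.sum_insert (by decide), Finset.sum_insert (by decide), Finset.sum_singleton]
  simp [Set.indicator]
  ring

lemma nonneg_iff (ρ : ℤ) : 0 ≤ θEx ρ ↔ ¬(ρ = 0 ∨ ρ = 1 ∨ ρ = 2) := by
  rw [← not_lt]
  have := Set.ext_iff.mp theta_neg_set ρ
  simp only [Set.mem_setOf_eq, Set.mem_insert_iff, Set.mem_singleton_iff] at this
  exact not_congr this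

lemma DsubNeg_eq (N : ℤ) :
    DsubNeg θEx (Finset.Icc (-N) N) = Finset.Icc (-N) N \ ({0,1,2} : Finset ℤ) := by
  unfold DsubNeg
  ext ρ
  simp only [Finset.mem_filter, Finset.mem_sdiff, Finset.mem_insert, Finset.mem_singleton]
  rw [nonneg_iff]

lemma triple_subset (N : ℤ) (hN : 3 ≤ N) : ({0,1,2} : Finset ℤ) ⊆ Finset.Icc (-N) N := by
  intro x hx
  simp only [Finset.mem_insert, Finset.mem_singleton] at hx
  simp only [Finset.mem_Icc]
  omega

lemma dD_cast (N : ℤ) (hN : 3 ≤ N) : (dD θEx (Finset.Icc (-N) N) : ℝ) = 2*(N:ℝ) - 2 := by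
  rw [dD, DsubNeg_eq N, Finset.card_sdiff_of_subset (triple_subset N hN), Int.card_Icc]
  have h1 : (N + 1 - -N).toNat = (2*N+1).toNat := by congr 1; ring
  have hc : ({0,1,2} : Finset ℤ).card = 3 := rfl
  rw [h1, hc]
  have h2 : ((2*N+1).toNat - 3 : ℕ) = (2*N-2).toNat := by omega
  rw [h2]
  have h3 : ((2*N-2).toNat : ℤ) = 2*N-2 := Int.toNat_of_nonneg (by omega)
  have h4 := congrArg (fun z : ℤ => (z:ℝ)) h3
  push_cast at h4
  linarith

lemma geom_finsum : ∀ N : ℤ, 3 ≤ N →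
    (∑ ρ ∈ Finset.Icc (3:ℤ) N, (2:ℝ)^(2-ρ) = 1 - (2:ℝ)^(2-N)) := by
  refine Int.le_induction ?_ ?_
  · norm_num [Finset.Icc_self]
  · intro N hN ih
    rw [show Finset.Icc (3:ℤ) (N+1) = insert (N+1) (Finset.Icc 3 N) by
        ext x; simp only [Finset.mem_Icc, Finset.mem_insert]; omega,
      Finset.sum_insert (by simp [Finset.mem_Icc])]
    rw [ih]
    have h2 : (2:ℝ)^(2-N) = 2*(2:ℝ)^(2-(N+1)) := by
      rw [show (2-N) = (2-(N+1))+1 by ring, zpow_add₀ (by norm_num : (2:ℝ) ≠ 0)]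
      ring
    rw [h2]; ring

lemma SD_eval (N : ℤ) (hN : 3 ≤ N) : SD hEx θEx (Finset.Icc (-N) N) = (2:ℝ)^(2-N) := by
  have h1 : SD hEx θEx (Finset.Icc (-N) N)
      = ∑' ρ : ℤ, Set.indicator {ρ : ℤ | ρ ∉ Finset.Icc (-N) N}
          (fun ρ => ((θEx ρ : ℚ):ℝ) * (hEx ρ : ℝ)) ρ := by
    exact tsum_subtype {ρ : ℤ | ρ ∉ Finset.Icc (-N) N} fun ρ => ((θEx ρ : ℚ):ℝ) * (hEx ρ : ℝ)
  rw [h1]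
  have h2 : Set.indicator {ρ : ℤ | ρ ∉ Finset.Icc (-N) N}
      (fun ρ => ((θEx ρ : ℚ):ℝ) * (hEx ρ : ℝ))
      = fun r => if N < r then (2:ℝ)^(2-r) else 0 := by
    funext r
    by_cases hr : N < r
    · rw [Set.indicator_of_mem (by simp only [Set.mem_setOf_eq, Finset.mem_Icc]; omega),
        if_pos hr, θEx_large r (by omega)]
      simp only [hEx]
      rw [if_neg (by omega)]
      push_cast
      ring
    · by_cases hr2 : r < -N
      · rw [Set.indicator_of_mem (by simp only [Set.mem_setOf_eq, Finset.mem_Icc]; omega),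
          if_neg hr, θEx_neg2 r (by omega)]
        norm_num
      · rw [Set.indicator_of_notMem (by simp only [Set.mem_setOf_eq, Finset.mem_Icc]; omega),
          if_neg hr]
  rw [h2]
  refine HasSum.tsum_eq ?_
  have hinj : Function.Injective (fun n : ℕ => (n:ℤ) + (N+1)) := fun a b hab => by
    simpa using hab
  have hzero : ∀ x ∉ Set.range (fun n : ℕ => (n:ℤ) + (N+1)),
      (if N < x then (2:ℝ)^(2-x) else 0) = 0 := by
    intro x hx
    rw [if_neg]
    intro hc
    exact hx ⟨(x-N-1).toNat, by simp; omega⟩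
  apply (hinj.hasSum_iff hzero).mp
  have hg := (hasSum_geometric_of_lt_one (r := (2:ℝ)⁻¹) (by norm_num)
    (by norm_num)).mul_left ((2:ℝ)^(1-N))
  convert hg using 1
  · rfl
  · funext n
    simp only [Function.comp]
    rw [if_pos (by omega)]
    rw [show (2-((n:ℤ)+(N+1))) = (1-N) + (-(n:ℤ)) by ring,
      zpow_add₀ (by norm_num : (2:ℝ) ≠ 0), zpow_neg, zpow_natCast, ← inv_pow]
  · rw [show (2-N) = (1-N)+1 by ring, zpow_add₀ (by norm_num : (2:ℝ) ≠ 0)]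
    norm_num

lemma sum_Icc_split (h' : ℤ → ℕ) (N : ℤ) (hN : 3 ≤ N) :
    ∑ ρ ∈ Finset.Icc (-N) N, ((θEx ρ:ℚ):ℝ) * (h' ρ:ℝ)
      = (∑ ρ ∈ Finset.Icc (-1:ℤ) 2, ((θEx ρ:ℚ):ℝ) * (h' ρ:ℝ))
        + ∑ ρ ∈ Finset.Icc (3:ℤ) N, ((θEx ρ:ℚ):ℝ) * (h' ρ:ℝ) := by
  rw [← Finset.sum_subset (Finset.Icc_subset_Icc (by omega) le_rfl :
      Finset.Icc (-1:ℤ) N ⊆ Finset.Icc (-N) N) ?_]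
  · rw [show Finset.Icc (-1:ℤ) N = Finset.Icc (-1:ℤ) 2 ∪ Finset.Icc 3 N by
        ext x; simp only [Finset.mem_Icc, Finset.mem_union]; omega,
      Finset.sum_union (by
        rw [Finset.disjoint_left]
        intro a ha hb
        simp only [Finset.mem_Icc] at ha hb
        omega)]
  · intro x hx hnx
    simp only [Finset.mem_Icc] at hx hnx
    rw [θEx_neg2 x (by omega)]
    norm_num

lemma Icc_m1_2 : Finset.Icc (-1:ℤ) 2 = ({-1,0,1,2} : Finset ℤ) := by
  ext x; simp only [Finset.mem_Icc, Finset.mem_insert, Finset.mem_singleton]; omega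

lemma sumB_one (h' : ℤ → ℕ) (hsupp : ∀ r : ℤ, r ≤ -1 → h' r = 0)
    (hone : ∀ r : ℤ, 3 ≤ r → h' r = 1) (N : ℤ) (hN : 3 ≤ N) :
    ∑ ρ ∈ DsubNeg θEx (Finset.Icc (-N) N), (h' ρ:ℝ)/(hEx ρ:ℝ) = (N:ℝ) - 2 := by
  rw [DsubNeg_eq N]
  rw [← Finset.sum_subset (show Finset.Icc (3:ℤ) N ⊆ Finset.Icc (-N) N \ ({0,1,2}:Finset ℤ) by
      intro x hx
      simp only [Finset.mem_Icc] at hx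
      simp only [Finset.mem_sdiff, Finset.mem_Icc, Finset.mem_insert, Finset.mem_singleton]
      omega) ?_]
  · rw [Finset.sum_congr rfl (fun ρ hρ => by
      simp only [Finset.mem_Icc] at hρ
      rw [hone ρ (by omega)]
      simp only [hEx]
      rw [if_neg (by omega)]
      norm_num : ∀ ρ ∈ Finset.Icc (3:ℤ) N, (h' ρ:ℝ)/(hEx ρ:ℝ) = 1)]
    rw [Finset.sum_const, Int.card_Icc, nsmul_eq_mul, mul_one]
    have h3 : ((N+1-3).toNat : ℤ) = N - 2 := by rw [Int.toNat_of_nonneg (by omega)]; ring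
    have h4 := congrArg (fun z : ℤ => (z:ℝ)) h3
    push_cast at h4
    linarith [h4]
  · intro x hx hnx
    simp only [Finset.mem_sdiff, Finset.mem_Icc, Finset.mem_insert, Finset.mem_singleton] at hx
    simp only [Finset.mem_Icc] at hnx
    rw [hsupp x (by omega)]
    norm_num

lemma sumB_zero (h' : ℤ → ℕ) (hsupp : ∀ r : ℤ, ¬(r = 0 ∨ r = 1) → h' r = 0) (N : ℤ) :
    ∑ ρ ∈ DsubNeg θEx (Finset.Icc (-N) N), (h' ρ:ℝ)/(hEx ρ:ℝ) = 0 := by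
  rw [DsubNeg_eq N]
  apply Finset.sum_eq_zero
  intro ρ hρ
  simp only [Finset.mem_sdiff, Finset.mem_Icc, Finset.mem_insert, Finset.mem_singleton] at hρ
  rw [hsupp ρ (by omega)]
  norm_num

lemma tailA_one (h' : ℤ → ℕ) (hone : ∀ r : ℤ, 3 ≤ r → h' r = 1) (N : ℤ) (hN : 3 ≤ N) :
    ∑ ρ ∈ Finset.Icc (3:ℤ) N, ((θEx ρ:ℚ):ℝ)*(h' ρ:ℝ) = 1 - (2:ℝ)^(2-N) := by
  rw [show ∑ ρ ∈ Finset.Icc (3:ℤ) N, ((θEx ρ:ℚ):ℝ)*(h' ρ:ℝ)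
      = ∑ ρ ∈ Finset.Icc (3:ℤ) N, (2:ℝ)^(2-ρ) from Finset.sum_congr rfl fun ρ hρ => by
    simp only [Finset.mem_Icc] at hρ
    rw [θEx_large ρ (by omega), hone ρ (by omega)]
    push_cast
    ring]
  exact geom_finsum N hN

lemma tailA_zero (h' : ℤ → ℕ) (hz : ∀ r : ℤ, 3 ≤ r → h' r = 0) (N : ℤ) :
    ∑ ρ ∈ Finset.Icc (3:ℤ) N, ((θEx ρ:ℚ):ℝ)*(h' ρ:ℝ) = 0 := by
  apply Finset.sum_eq_zero
  intro ρ hρ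
  simp only [Finset.mem_Icc] at hρ
  rw [hz ρ (by omega)]
  norm_num

lemma A1 (N : ℤ) (hN : 3 ≤ N) :
    ∑ ρ ∈ Finset.Icc (-N) N, ((θEx ρ:ℚ):ℝ)*(hSub₁ ρ:ℝ) = -1 := by
  rw [sum_Icc_split hSub₁ N hN, Icc_m1_2,
    tailA_zero hSub₁ (fun r hr => by simp only [hSub₁]; rw [if_neg (by omega)]) N,
    Finset.sum_insert (by decide), Finset.sum_insert (by decide),
    Finset.sum_insert (by decide), Finset.sum_singleton]
  norm_num [θEx, hSub₁]

lemma A5 (N : ℤ) (hN : 3 ≤ N) :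
    ∑ ρ ∈ Finset.Icc (-N) N, ((θEx ρ:ℚ):ℝ)*(hSub₅ ρ:ℝ) = -2 := by
  rw [sum_Icc_split hSub₅ N hN, Icc_m1_2,
    tailA_zero hSub₅ (fun r hr => by simp only [hSub₅]; rw [if_neg (by omega)]) N,
    Finset.sum_insert (by decide), Finset.sum_insert (by decide),
    Finset.sum_insert (by decide), Finset.sum_singleton]
  norm_num [θEx, hSub₅]

lemma A2 (N : ℤ) (hN : 3 ≤ N) :
    ∑ ρ ∈ Finset.Icc (-N) N, ((θEx ρ:ℚ):ℝ)*(hSub₂ ρ:ℝ) = -2 - (2:ℝ)^(2-N) := by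
  rw [sum_Icc_split hSub₂ N hN, Icc_m1_2,
    tailA_one hSub₂ (fun r hr => by simp only [hSub₂]; rw [if_pos (by omega)]) N hN,
    Finset.sum_insert (by decide), Finset.sum_insert (by decide),
    Finset.sum_insert (by decide), Finset.sum_singleton]
  norm_num [θEx, hSub₂]
  ring

lemma A3 (N : ℤ) (hN : 3 ≤ N) :
    ∑ ρ ∈ Finset.Icc (-N) N, ((θEx ρ:ℚ):ℝ)*(hSub₃ ρ:ℝ) = -3 - (2:ℝ)^(2-N) := by
  rw [sum_Icc_split hSub₃ N hN, Icc_m1_2,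
    tailA_one hSub₃ (fun r hr => by simp only [hSub₃]; rw [if_pos (by omega)]) N hN,
    Finset.sum_insert (by decide), Finset.sum_insert (by decide),
    Finset.sum_insert (by decide), Finset.sum_singleton]
  norm_num [θEx, hSub₃]
  ring

lemma A4 (N : ℤ) (hN : 3 ≤ N) :
    ∑ ρ ∈ Finset.Icc (-N) N, ((θEx ρ:ℚ):ℝ)*(hSub₄ ρ:ℝ) = -4 - (2:ℝ)^(2-N) := by
  rw [sum_Icc_split hSub₄ N hN, Icc_m1_2,
    tailA_one hSub₄ (fun r hr => by
      simp only [hSub₄]; rw [if_neg (by omega), if_pos (by omega)]) N hN,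
    Finset.sum_insert (by decide), Finset.sum_insert (by decide),
    Finset.sum_insert (by decide), Finset.sum_singleton]
  norm_num [θEx, hSub₄]
  ring

lemma hSub₂_supp (r : ℤ) (hr : r ≤ -1) : hSub₂ r = 0 := by
  simp only [hSub₂]; rw [if_neg (by omega)]

lemma hSub₃_supp (r : ℤ) (hr : r ≤ -1) : hSub₃ r = 0 := by
  simp only [hSub₃]; rw [if_neg (by omega)]

lemma hSub₄_supp (r : ℤ) (hr : r ≤ -1) : hSub₄ r = 0 := by
  simp only [hSub₄]; rw [if_neg (by omega), if_neg (by omega)]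

lemma muD₁_eval (N : ℤ) (hN : 3 ≤ N) : muD hEx θEx (Finset.Icc (-N) N) hSub₁ = 1 := by
  unfold muD
  rw [rkNeg_eval, A1 N hN,
    sumB_zero hSub₁ (fun r hr => by simp only [hSub₁]; rw [if_neg (by omega)]) N]
  norm_num [hSub₁]

lemma muD₅_eval (N : ℤ) (hN : 3 ≤ N) : muD hEx θEx (Finset.Icc (-N) N) hSub₅ = 1 := by
  unfold muD
  rw [rkNeg_eval, A5 N hN,
    sumB_zero hSub₅ (fun r hr => by simp only [hSub₅]; rw [if_neg (by omega)]) N]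
  norm_num [hSub₅]

lemma muD₂_eval (N : ℤ) (hN : 3 ≤ N) : muD hEx θEx (Finset.Icc (-N) N) hSub₂ =
    1 + ((2:ℝ)^(2-N) - (2:ℝ)^(2-N)*((N:ℝ)-2)/(2*(N:ℝ)-2))/2 := by
  unfold muD
  rw [rkNeg_eval, A2 N hN, SD_eval N hN, dD_cast N hN,
    sumB_one hSub₂ hSub₂_supp (fun r hr => by simp only [hSub₂]; rw [if_pos (by omega)]) N hN]
  have hd : (2*(N:ℝ)-2) ≠ 0 := by
    have : (3:ℝ) ≤ (N:ℝ) := by exact_mod_cast hN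
    linarith
  norm_num [hSub₂]
  field_simp
  ring

lemma muD₃_eval (N : ℤ) (hN : 3 ≤ N) : muD hEx θEx (Finset.Icc (-N) N) hSub₃ =
    1 + ((2:ℝ)^(2-N) - (2:ℝ)^(2-N)*((N:ℝ)-2)/(2*(N:ℝ)-2))/3 := by
  unfold muD
  rw [rkNeg_eval, A3 N hN, SD_eval N hN, dD_cast N hN,
    sumB_one hSub₃ hSub₃_supp (fun r hr => by simp only [hSub₃]; rw [if_pos (by omega)]) N hN]
  have hd : (2*(N:ℝ)-2) ≠ 0 := by
    have : (3:ℝ) ≤ (N:ℝ) := by exact_mod_cast hN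
    linarith
  norm_num [hSub₃]
  field_simp
  ring

lemma muD₄_eval (N : ℤ) (hN : 3 ≤ N) : muD hEx θEx (Finset.Icc (-N) N) hSub₄ =
    1 + ((2:ℝ)^(2-N) - (2:ℝ)^(2-N)*((N:ℝ)-2)/(2*(N:ℝ)-2))/4 := by
  unfold muD
  rw [rkNeg_eval, A4 N hN, SD_eval N hN, dD_cast N hN,
    sumB_one hSub₄ hSub₄_supp (fun r hr => by
      simp only [hSub₄]; rw [if_neg (by omega), if_pos (by omega)]) N hN]
  have hd : (2*(N:ℝ)-2) ≠ 0 := by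
    have : (3:ℝ) ≤ (N:ℝ) := by exact_mod_cast hN
    linarith
  norm_num [hSub₄]
  field_simp
  ring

/-- Example 4.4: all five proper submodules have θ-slope `1`, and for all big enough
`N` the D-slopes for `D_N = {−N,…,N}` satisfy
`μ_{D_N}(h₂) > μ_{D_N}(h₃) > μ_{D_N}(h₄) > μ_{D_N}(h₁) = μ_{D_N}(h₅) = 1`. -/
theorem example_4_4 :
    IsStabilityFunction hEx θEx ∧
    {ρ : ℤ | θEx ρ < 0} = {0, 1, 2} ∧
    muTheta θEx hSub₁ = 1 ∧ muTheta θEx hSub₂ = 1 ∧ muTheta θEx hSub₃ = 1 ∧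
    muTheta θEx hSub₄ = 1 ∧ muTheta θEx hSub₅ = 1 ∧ muTheta θEx hEx = 0 ∧
    ∃ N₁ : ℤ, ∀ N : ℤ, N₁ ≤ N →
      Admissible hEx θEx (Finset.Icc (-N) N) ∧
      muD hEx θEx (Finset.Icc (-N) N) hSub₃ < muD hEx θEx (Finset.Icc (-N) N) hSub₂ ∧
      muD hEx θEx (Finset.Icc (-N) N) hSub₄ < muD hEx θEx (Finset.Icc (-N) N) hSub₃ ∧
      muD hEx θEx (Finset.Icc (-N) N) hSub₁ < muD hEx θEx (Finset.Icc (-N) N) hSub₄ ∧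
      muD hEx θEx (Finset.Icc (-N) N) hSub₁ = 1 ∧
      muD hEx θEx (Finset.Icc (-N) N) hSub₅ = 1 := by
  refine ⟨?_, theta_neg_set, ?_, ?_, ?_, ?_, ?_, ?_, ?_⟩
  · refine ⟨?_, ?_, ?_, hasSum_hEx.summable, hasSum_hEx.tsum_eq⟩
    · rw [theta_neg_set]
      exact (Set.finite_singleton 2).insert 1 |>.insert 0
    · apply Set.Infinite.mono (show Set.Ici (3:ℤ) ⊆ {ρ : ℤ | 0 < θEx ρ} from
        fun r hr => θEx_pos_large r hr)
      exact Set.Ici_infinite 3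
    · intro ρ hρ
      exfalso
      simp only [hEx] at hρ
      split_ifs at hρ <;> omega
  · unfold muTheta thetaVal
    rw [hasSum_h1.tsum_eq, rkNeg_eval]
    norm_num [hSub₁]
  · unfold muTheta thetaVal
    rw [hasSum_h2.tsum_eq, rkNeg_eval]
    norm_num [hSub₂]
  · unfold muTheta thetaVal
    rw [hasSum_h3.tsum_eq, rkNeg_eval]
    norm_num [hSub₃]
  · unfold muTheta thetaVal
    rw [hasSum_h4.tsum_eq, rkNeg_eval]
    norm_num [hSub₄]
  · unfold muTheta thetaVal
    rw [hasSum_h5.tsum_eq, rkNeg_eval]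
    norm_num [hSub₅]
  · unfold muTheta thetaVal
    rw [hasSum_hEx.tsum_eq, rkNeg_eval]
    norm_num
  · refine ⟨3, fun N hN => ⟨⟨?_, ?_, ?_⟩, ?_, ?_, ?_, muD₁_eval N hN, muD₅_eval N hN⟩⟩
    · rw [theta_neg_set]
      intro ρ hρ
      simp only [Set.mem_insert_iff, Set.mem_singleton_iff] at hρ
      simp only [Finset.coe_Icc, Set.mem_Icc]
      omega
    · intro ρ _
      simp only [Set.mem_setOf_eq, hEx]
      split_ifs <;> omega
    · exact ⟨-1, by simp only [Finset.mem_Icc]; omega, by norm_num [θEx]⟩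
    · rw [muD₂_eval N hN, muD₃_eval N hN]
      have hN3 : (3:ℝ) ≤ (N:ℝ) := by exact_mod_cast hN
      have hs : (0:ℝ) < (2:ℝ)^(2-N) := zpow_pos (by norm_num) _
      have ht : 0 < (2:ℝ)^(2-N) - (2:ℝ)^(2-N)*((N:ℝ)-2)/(2*(N:ℝ)-2) := by
        have he : (2:ℝ)^(2-N) - (2:ℝ)^(2-N)*((N:ℝ)-2)/(2*(N:ℝ)-2)
            = (2:ℝ)^(2-N)*(N:ℝ)/(2*(N:ℝ)-2) := by
          have hd : (2*(N:ℝ)-2) ≠ 0 := by linarith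
          have hd2 : (N:ℝ) - 1 ≠ 0 := by linarith
          field_simp
          ring
        rw [he]
        apply div_pos (mul_pos hs (by linarith)) (by linarith)
      linarith
    · rw [muD₃_eval N hN, muD₄_eval N hN]
      have hN3 : (3:ℝ) ≤ (N:ℝ) := by exact_mod_cast hN
      have hs : (0:ℝ) < (2:ℝ)^(2-N) := zpow_pos (by norm_num) _
      have ht : 0 < (2:ℝ)^(2-N) - (2:ℝ)^(2-N)*((N:ℝ)-2)/(2*(N:ℝ)-2) := by
        have he : (2:ℝ)^(2-N) - (2:ℝ)^(2-N)*((N:ℝ)-2)/(2*(N:ℝ)-2)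
            = (2:ℝ)^(2-N)*(N:ℝ)/(2*(N:ℝ)-2) := by
          have hd : (2*(N:ℝ)-2) ≠ 0 := by linarith
          have hd2 : (N:ℝ) - 1 ≠ 0 := by linarith
          field_simp
          ring
        rw [he]
        apply div_pos (mul_pos hs (by linarith)) (by linarith)
      linarith
    · rw [muD₁_eval N hN, muD₄_eval N hN]
      have hN3 : (3:ℝ) ≤ (N:ℝ) := by exact_mod_cast hN
      have hs : (0:ℝ) < (2:ℝ)^(2-N) := zpow_pos (by norm_num) _
      have ht : 0 < (2:ℝ)^(2-N) - (2:ℝ)^(2-N)*((N:ℝ)-2)/(2*(N:ℝ)-2) := by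
        have he : (2:ℝ)^(2-N) - (2:ℝ)^(2-N)*((N:ℝ)-2)/(2*(N:ℝ)-2)
            = (2:ℝ)^(2-N)*(N:ℝ)/(2*(N:ℝ)-2) := by
          have hd : (2*(N:ℝ)-2) ≠ 0 := by linarith
          have hd2 : (N:ℝ) - 1 ≠ 0 := by linarith
          field_simp
          ring
        rw [he]
        apply div_pos (mul_pos hs (by linarith)) (by linarith)
      linarith
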